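/- arXiv:1909.05345 — 3 statements merged into one kernel-verified Lean document; each statement's English description precedes it below -/
import Mathlib

section
/- The Part-Whole principle holds for size sequences: let X be a type, l : X → ℕ a finite-to-one labelling, and A, B : Set X. If A is a proper subset of B (A ⊆ B and A ≠ B), then σ(A) <_F σ(B), i.e., there exists m such that for all n > m, σ_n(A) < σ_n(B). -/
theorem size_sequence_part_whole
    (X : Type*) (l : X → ℕ) (hl : ∀ n, {x | l x = n}.Finite)
    (A B : Set X) (hAB : A ⊆ B) (hne : A ≠ B) :
    ∃ m, ∀ n > m,
      Set.ncard (A ∩ {x | l x ≤ n}) < Set.ncard (B ∩ {x | l x ≤ n}) := by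
  obtain ⟨x, hxB, hxA⟩ : ∃ x, x ∈ B ∧ x ∉ A := by
    by_contra h
    push_neg at h
    exact hne (Set.Subset.antisymm hAB h)
  refine ⟨l x, fun n hn => ?_⟩
  have hfin : {y | l y ≤ n}.Finite := by
    have : {y | l y ≤ n} = ⋃ k ∈ Finset.range (n+1), {y | l y = k} := by
      ext y
      simp [Nat.lt_succ_iff]
    rw [this]
    exact Set.Finite.biUnion (Finset.range (n+1)).finite_toSet fun k _ => hl k
  apply Set.ncard_lt_ncard
  · constructor
    · exact Set.inter_subset_inter_left _ hAB
    · intro h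
      exact hxA (h ⟨hxB, le_of_lt hn⟩).1
  · exact hfin.inter_of_right _
end

section
/- The size of the set of primes is eventually smaller than the size of the set of multiples of k, for every k: for every k ≥ 1 there exists m such that for all n > m, Nat.primeCounting n < ((Finset.Icc 1 n).filter (fun j => k ∣ j)).card. -/
/-!
Every prime above `4 ^ s` contributes a factor larger than `4 ^ s` to the primorial of `n`,
which is at most `4 ^ n`; so there are at most `n / s` such primes, and `π n ≤ 4 ^ s + n / s`.
Taking `s = 2 k` gives `π n ≤ 4 ^ (2 k) + (n / k) / 2`, which is eventually below `n / k`,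
the number of multiples of `k` in `[1, n]`.
-/

open Finset
open scoped Nat.Prime

namespace Nat

theorem primeCounting_le_self (n : ℕ) : π n ≤ n := by
  rw [← primesLE_card_eq_primeCounting, primesLE_eq_filter_Icc_one]
  exact (card_filter_le _ _).trans (by simp)

theorem pow_card_primesLE_filter_lt_le (B n : ℕ) :
    B ^ #{p ∈ primesLE n | B < p} ≤ 4 ^ n :=
  calc B ^ #{p ∈ primesLE n | B < p}
      ≤ ∏ p ∈ primesLE n with B < p, p :=
        pow_card_le_prod _ _ _ fun _ hp => (mem_filter.1 hp).2.le
    _ ≤ ∏ p ∈ primesLE n, p :=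
        prod_le_prod_of_subset_of_one_le' (filter_subset _ _)
          fun _ hp _ => (prime_of_mem_primesLE hp).one_le
    _ = primorial n := rfl
    _ ≤ 4 ^ n := primorial_le_four_pow n

theorem mul_card_primesLE_filter_four_pow_lt_le (s n : ℕ) :
    s * #{p ∈ primesLE n | 4 ^ s < p} ≤ n := by
  rw [← Nat.pow_le_pow_iff_right (by norm_num : 1 < 4), pow_mul]
  exact pow_card_primesLE_filter_lt_le _ n

theorem primeCounting_le_add_card_filter_lt (B n : ℕ) :
    π n ≤ π B + #{p ∈ primesLE n | B < p} := by
  rw [← primesLE_card_eq_primeCounting n, ← card_filter_add_card_filter_not (B < ·), add_comm,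
    ← primesLE_card_eq_primeCounting B]
  gcongr
  intro p hp
  simp only [mem_filter, mem_primesLE, not_lt] at hp ⊢
  exact ⟨hp.2, hp.1.2⟩

theorem primeCounting_le_four_pow_add_div {s : ℕ} (hs : 0 < s) (n : ℕ) :
    π n ≤ 4 ^ s + n / s := by
  have hlarge := (Nat.le_div_iff_mul_le hs).2 <|
    (mul_comm _ _).trans_le (mul_card_primesLE_filter_four_pow_lt_le s n)
  have hsplit := primeCounting_le_add_card_filter_lt (4 ^ s) n
  have hsmall := primeCounting_le_self (4 ^ s)
  omega

end Nat

theorem primes_eventually_fewer_than_multiples (k : ℕ) (hk : 1 ≤ k) :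
    ∃ m, ∀ n > m,
      Nat.primeCounting n < ((Finset.Icc 1 n).filter (fun j => k ∣ j)).card := by
  refine ⟨k * (2 * 4 ^ (2 * k) + 2), fun n hn => ?_⟩
  rw [show Finset.Icc 1 n = Finset.Ioc 0 n from rfl, Nat.Ioc_filter_dvd_card_eq_div]
  have hπ := Nat.primeCounting_le_four_pow_add_div (by omega : 0 < 2 * k) n
  rw [show n / (2 * k) = n / k / 2 by rw [Nat.div_div_eq_div_mul, mul_comm]] at hπ
  have hq : 2 * 4 ^ (2 * k) + 2 ≤ n / k := (Nat.le_div_iff_mul_le hk).2 (by rw [mul_comm]; omega)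
  omega
end

section
/- The size of the set of k-th powers is eventually smaller than the size of the set of primes, for every k ≥ 2: for every k ≥ 2 there exists m such that for all n > m, ((Finset.Icc 1 n).filter (fun j => ∃ i, i ^ k = j)).card < Nat.primeCounting n. -/
/-!
There are at most `√n` perfect `k`-th powers in `[1, n]` when `k ≥ 2`, while Chebyshev's
lower bound `π n ≥ (n log 2 - log (n + 1)) / log n` grows like `n / log n`, and
`√n · log n = o(n)`.
-/

open Real Filter Asymptotics Finset

open scoped Classical in
theorem card_filter_exists_pow_eq_le_sqrt {k : ℕ} (hk : 2 ≤ k) (n : ℕ) :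
    ((Icc 1 n).filter (fun j => ∃ i, i ^ k = j)).card ≤ n.sqrt := by
  have hsub :
      (Icc 1 n).filter (fun j => ∃ i, i ^ k = j) ⊆ (Icc 1 n.sqrt).image (· ^ k) := by
    intro j hj
    obtain ⟨⟨hj1, hjn⟩, i, rfl⟩ : (1 ≤ j ∧ j ≤ n) ∧ ∃ i, i ^ k = j := by simpa using hj
    have hi : 1 ≤ i :=
      Nat.pos_of_ne_zero (by rintro rfl; simp [zero_pow (by omega : k ≠ 0)] at hj1)
    refine mem_image.mpr ⟨i, mem_Icc.mpr ⟨hi, Nat.le_sqrt.mpr ?_⟩, rfl⟩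
    calc i * i = i ^ 2 := (sq i).symm
      _ ≤ i ^ k := Nat.pow_le_pow_right hi hk
      _ ≤ n := hjn
  calc _ ≤ ((Icc 1 n.sqrt).image (· ^ k)).card := card_le_card hsub
    _ ≤ (Icc 1 n.sqrt).card := card_image_le
    _ = n.sqrt := by simp

theorem isLittleO_sqrt_mul_log_atTop : (fun x => √x * log x) =o[atTop] id := by
  refine ((isBigO_refl sqrt atTop).mul_isLittleO
    (isLittleO_log_rpow_atTop one_half_pos)).congr' .rfl ?_
  filter_upwards [eventually_ge_atTop 0] with x hx
  rw [← sqrt_eq_rpow, mul_self_sqrt hx, id]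

theorem isLittleO_log_add_one_atTop : (fun x => log (x + 1)) =o[atTop] id :=
  (isLittleO_log_id_atTop.comp_tendsto (tendsto_atTop_add_const_right atTop 1 tendsto_id)
    ).trans_isBigO ((isBigO_refl id atTop).add (isLittleO_const_id_atTop 1).isBigO)

theorem eventually_sqrt_mul_log_add_log_add_one_lt :
    ∀ᶠ x : ℝ in atTop, √x * log x + log (x + 1) < x * log 2 := by
  have hlog2 : 0 < log 2 := log_pos one_lt_two
  filter_upwards [(isLittleO_sqrt_mul_log_atTop.add isLittleO_log_add_one_atTop).bound
    (half_pos hlog2), eventually_gt_atTop 0] with x hx hx0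
  calc √x * log x + log (x + 1) ≤ ‖√x * log x + log (x + 1)‖ := le_norm_self _
    _ ≤ log 2 / 2 * x := by simpa [abs_of_pos hx0] using hx
    _ < x * log 2 := by nlinarith

theorem eventually_sqrt_lt_primeCounting : ∀ᶠ n : ℕ in atTop, n.sqrt < n.primeCounting := by
  filter_upwards [tendsto_natCast_atTop_atTop.eventually eventually_sqrt_mul_log_add_log_add_one_lt,
    eventually_ge_atTop 2] with n hn hn2
  have hlog : 0 < log n := log_pos (by exact_mod_cast hn2)
  have : (n.sqrt : ℝ) < n.primeCounting := calc
    (n.sqrt : ℝ) ≤ √n := nat_sqrt_le_real_sqrt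
    _ < (n * log 2 - log (n + 1)) / log n := by rw [lt_div_iff₀ hlog]; linarith
    _ ≤ n.primeCounting := Chebyshev.pi_ge n
  exact_mod_cast this

open scoped Classical in
theorem powers_eventually_fewer_than_primes (k : ℕ) (hk : 2 ≤ k) :
    ∃ m, ∀ n > m,
      ((Finset.Icc 1 n).filter (fun j => ∃ i, i ^ k = j)).card <
        Nat.primeCounting n := by
  obtain ⟨m, hm⟩ := eventually_atTop.mp eventually_sqrt_lt_primeCounting
  exact ⟨m, fun n hn => (card_filter_exists_pow_eq_le_sqrt hk n).trans_lt (hm n hn.le)⟩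
end
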